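/- arXiv:2203.08670 — 2 statements merged into one kernel-verified Lean document; each statement's English description precedes it below -/
import Mathlib

section
/- Let f : ℝ^N → ℝ^K be a classifier that is differentiable at a point x, let S ⊆ {1,…,N} be the set of protected coordinates, and suppose f satisfies statistical parity with respect to S, i.e., f(x) = f(x') for all inputs x, x' that agree on every coordinate outside S. Let w ∈ ℝ^K and v ∈ ℝ^N be stochastic vectors (all entries nonnegative and summing to one) with v_i = 0 for every i ∉ S. Then the accumulated prediction sensitivity P = Σ_{k=1}^K Σ_{i=1}^N w_k · |∂f_k/∂x_i (x)| · v_i equals 0. -/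
/-- **Accumulated prediction sensitivity under statistical parity.**
If the classifier `f : ℝ^N → ℝ^K` is differentiable at `x` and satisfies
statistical parity with respect to the set `S` of protected coordinates
(i.e. `f y = f y'` whenever `y` and `y'` agree on every coordinate outside `S`),
and `w`, `v` are stochastic vectors with `v i = 0` for every `i ∉ S`, then the
accumulated prediction sensitivity
`P = ∑ k ∑ i, w k * |∂f_k/∂x_i (x)| * v i` equals `0`. -/
theorem accumulated_prediction_sensitivity_eq_zero_of_statistical_parity
    {N K : ℕ} (f : (Fin N → ℝ) → (Fin K → ℝ)) (x : Fin N → ℝ)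
    (hf : DifferentiableAt ℝ f x) (S : Set (Fin N))
    (hparity : ∀ y y' : Fin N → ℝ, (∀ i, i ∉ S → y i = y' i) → f y = f y')
    (w : Fin K → ℝ) (v : Fin N → ℝ)
    (hw_nonneg : ∀ k, 0 ≤ w k) (hw_sum : ∑ k, w k = 1)
    (hv_nonneg : ∀ i, 0 ≤ v i) (hv_sum : ∑ i, v i = 1)
    (hvS : ∀ i, i ∉ S → v i = 0) :
    ∑ k, ∑ i, w k * |fderiv ℝ f x (Pi.single i 1) k| * v i = 0 := by
  apply Finset.sum_eq_zero
  intro k _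
  apply Finset.sum_eq_zero
  intro i _
  by_cases hi : i ∈ S
  all_goals set e : Fin N → ℝ := Pi.single i 1 with he
  · -- the directional derivative along coordinate i ∈ S vanishes
    have hkey : fderiv ℝ f x e = 0 := by
      have hline : HasDerivAt (fun t : ℝ => x + t • e)
          e 0 := by
        simpa using ((hasDerivAt_id (0 : ℝ)).smul_const e).const_add x
      have hcomp : HasDerivAt (fun t : ℝ => f (x + t • e))
          (fderiv ℝ f x e) 0 := by
        have hfx : HasFDerivAt f (fderiv ℝ f x) (x + (0:ℝ) • e) := by
          simpa using hf.hasFDerivAt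
        exact hfx.comp_hasDerivAt 0 hline
      have hconst : (fun t : ℝ => f (x + t • e)) = fun _ => f x := by
        funext t
        apply hparity
        intro j hj
        have : e j = 0 := by
          rw [he]
          apply Pi.single_eq_of_ne
          rintro rfl
          exact hj hi
        simp [this]
      rw [hconst] at hcomp
      have := (hasDerivAt_const (0 : ℝ) (f x)).unique hcomp
      exact this.symm
    simp [hkey]
  · simp [hvS i hi]
end

section
/- Fix p with 1 ≤ p < ∞ and a constant L ≥ 0. Let f : ℝ^N → ℝ^K be differentiable at a point x and satisfy the Lipschitz fairness constraint ‖f(x) − f(x')‖_p ≤ L · ‖x − x'‖_p for all x, x' ∈ ℝ^N, where ‖·‖_p denotes the ℓ^p norm. Let w ∈ ℝ^K and v ∈ ℝ^N be stochastic vectors (entries nonnegative, summing to one). Then the accumulated prediction sensitivity P = Σ_{k=1}^K Σ_{i=1}^N w_k · |∂f_k/∂x_i (x)| · v_i satisfies P ≤ L. -/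
/-- **Accumulated prediction sensitivity is bounded by the Lipschitz fairness constant.**
Fix `1 ≤ p` and `0 ≤ L`. If `f : ℝ^N → ℝ^K` is differentiable at `x` and satisfies the
individual-fairness constraint `‖f y − f y'‖_p ≤ L * ‖y − y'‖_p` for all `y, y'`
(with `‖z‖_p = (∑ |z_j|^p)^(1/p)` the ℓ^p norm), and `w`, `v` are stochastic vectors,
then `P = ∑ k ∑ i, w k * |∂f_k/∂x_i (x)| * v i ≤ L`. -/
theorem accumulated_prediction_sensitivity_le_of_lipschitz
    {N K : ℕ} (p L : ℝ) (hp : 1 ≤ p) (hL : 0 ≤ L)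
    (f : (Fin N → ℝ) → (Fin K → ℝ)) (x : Fin N → ℝ)
    (hf : DifferentiableAt ℝ f x)
    (hlip : ∀ y y' : Fin N → ℝ,
      (∑ k, |f y k - f y' k| ^ p) ^ (1 / p) ≤ L * (∑ i, |y i - y' i| ^ p) ^ (1 / p))
    (w : Fin K → ℝ) (v : Fin N → ℝ)
    (hw_nonneg : ∀ k, 0 ≤ w k) (hw_sum : ∑ k, w k = 1)
    (hv_nonneg : ∀ i, 0 ≤ v i) (hv_sum : ∑ i, v i = 1) :
    ∑ k, ∑ i, w k * |fderiv ℝ f x (Pi.single i 1) k| * v i ≤ L := by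
  have hp0 : p ≠ 0 := by linarith
  have hp0' : (0:ℝ) < 1 / p := by positivity
  -- key: |fderiv ℝ f x (Pi.single i 1) k| ≤ L
  have key : ∀ (k : Fin K) (i : Fin N), |fderiv ℝ f x (Pi.single i 1) k| ≤ L := by
    intro k i
    set e : Fin N → ℝ := Pi.single i 1 with he
    set c : ℝ := fderiv ℝ f x e k with hc
    -- g t = f (x + t • e) k
    have hinner : HasDerivAt (fun t : ℝ => x + t • e) e 0 := by
      simpa using ((hasDerivAt_id (0:ℝ)).smul_const e).const_add x
    have hf' : HasFDerivAt f (fderiv ℝ f x) (x + (0:ℝ) • e) := by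
      simpa using hf.hasFDerivAt
    have hcomp : HasDerivAt (fun t : ℝ => f (x + t • e)) (fderiv ℝ f x e) 0 :=
      hf'.comp_hasDerivAt 0 hinner
    have hg : HasDerivAt (fun t : ℝ => f (x + t • e) k) c 0 :=
      ((ContinuousLinearMap.proj (R := ℝ) (φ := fun _ : Fin K => ℝ) k).hasFDerivAt.comp_hasDerivAt
        0 hcomp)
    -- Lipschitz bound on g
    have hlipg : ∀ t : ℝ, |f (x + t • e) k - f (x + (0:ℝ) • e) k| ≤ L * |t - 0| := by
      intro t
      have h1 : |f (x + t • e) k - f (x + (0:ℝ) • e) k|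
          ≤ (∑ k', |f (x + t • e) k' - f (x + (0:ℝ) • e) k'| ^ p) ^ (1 / p) := by
        have hsingle : |f (x + t • e) k - f (x + (0:ℝ) • e) k| ^ p
            ≤ ∑ k', |f (x + t • e) k' - f (x + (0:ℝ) • e) k'| ^ p :=
          Finset.single_le_sum (f := fun k' => |f (x + t • e) k' - f (x + (0:ℝ) • e) k'| ^ p)
            (fun j _ => Real.rpow_nonneg (abs_nonneg _) p)
            (Finset.mem_univ k)
        calc |f (x + t • e) k - f (x + (0:ℝ) • e) k|
            = (|f (x + t • e) k - f (x + (0:ℝ) • e) k| ^ p) ^ (1/p) := by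
              rw [one_div, Real.rpow_rpow_inv (abs_nonneg _) hp0]
          _ ≤ _ := Real.rpow_le_rpow (Real.rpow_nonneg (abs_nonneg _) p) hsingle hp0'.le
      have h2 : (∑ i', |(x + t • e) i' - (x + (0:ℝ) • e) i'| ^ p) ^ (1/p) = |t - 0| := by
        have : ∀ i', |(x + t • e) i' - (x + (0:ℝ) • e) i'| ^ p
            = if i' = i then |t| ^ p else 0 := by
          intro i'
          by_cases h : i' = i
          · subst h; simp [he, Pi.single_apply]
          · simp [he, Pi.single_apply, h, Real.zero_rpow hp0]
        rw [Finset.sum_congr rfl (fun i' _ => this i'), Finset.sum_ite_eq' Finset.univ i,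
          if_pos (Finset.mem_univ i), one_div, Real.rpow_rpow_inv (abs_nonneg _) hp0, sub_zero]
      calc |f (x + t • e) k - f (x + (0:ℝ) • e) k|
          ≤ (∑ k', |f (x + t • e) k' - f (x + (0:ℝ) • e) k'| ^ p) ^ (1/p) := h1
        _ ≤ L * (∑ i', |(x + t • e) i' - (x + (0:ℝ) • e) i'| ^ p) ^ (1/p) := hlip _ _
        _ = L * |t - 0| := by rw [h2]
    have hnorm : ‖ContinuousLinearMap.smulRight (1 : ℝ →L[ℝ] ℝ) c‖ ≤ L := by
      refine hg.hasFDerivAt.le_of_lip' hL ?_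
      filter_upwards with t
      simpa [Real.norm_eq_abs] using hlipg t
    have : |c| ≤ L := by
      have h1 : |c| = ‖(ContinuousLinearMap.smulRight (1 : ℝ →L[ℝ] ℝ) c) 1‖ := by
        simp [Real.norm_eq_abs]
      rw [h1]
      calc ‖(ContinuousLinearMap.smulRight (1 : ℝ →L[ℝ] ℝ) c) 1‖
          ≤ ‖ContinuousLinearMap.smulRight (1 : ℝ →L[ℝ] ℝ) c‖ * ‖(1:ℝ)‖ :=
            ContinuousLinearMap.le_opNorm _ _
        _ ≤ L := by simpa using hnorm
    exact this
  calc ∑ k, ∑ i, w k * |fderiv ℝ f x (Pi.single i 1) k| * v i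
      ≤ ∑ k, ∑ i, w k * L * v i := by
        refine Finset.sum_le_sum fun k _ => Finset.sum_le_sum fun i _ => ?_
        exact mul_le_mul_of_nonneg_right
          (mul_le_mul_of_nonneg_left (key k i) (hw_nonneg k)) (hv_nonneg i)
    _ = L := by
        simp_rw [mul_assoc, ← Finset.mul_sum, ← Finset.sum_mul, hv_sum, mul_one, hw_sum, one_mul]
end
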